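/- arXiv:1902.08529 — 6 statements merged into one kernel-verified Lean document; each statement's English description precedes it below -/
import Mathlib

section
/- For all rational numbers $Q_j, u_j, d_j, L_j, e_j$ ($j=1,2,3$), the identity $\sum_{j=1}^{3}(Q_j + d_j - L_j - e_j) = \tfrac{8}{3}\mathcal{A}_{331'} - \tfrac{1}{4}\mathcal{A}_{111'} - \mathcal{A}_{221'}$ holds. In particular, if $\mathcal{A}_{111'} = \mathcal{A}_{221'} = \mathcal{A}_{331'} = 0$ then $\sum_{j=1}^{3}(Q_j + d_j - L_j - e_j) = 0$ (the type-II sum rule). -/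
/-- The `U(1)_Y`-`U(1)_Y`-`U(1)'` anomaly coefficient. -/
def A111 (Q u d L e : Fin 3 → ℚ) : ℚ :=
  2/3 * ∑ j, (Q j + 8 * u j + 2 * d j + 3 * L j + 6 * e j)

/-- The `SU(2)_L`-`SU(2)_L`-`U(1)'` anomaly coefficient. -/
def A221 (Q L : Fin 3 → ℚ) : ℚ :=
  1/2 * ∑ j, (3 * Q j + L j)

/-- The `SU(3)_C`-`SU(3)_C`-`U(1)'` anomaly coefficient. -/
def A331 (Q u d : Fin 3 → ℚ) : ℚ :=
  1/2 * ∑ j, (2 * Q j + u j + d j)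

/-! The identity already holds generation by generation, so it is a termwise identity of sums. -/

theorem sum_typeII_eq_anomaly_combination (Q u d L e : Fin 3 → ℚ) :
    (∑ j, (Q j + d j - L j - e j)) =
      8/3 * A331 Q u d - 1/4 * A111 Q u d L e - A221 Q L := by
  simp only [A111, A221, A331, Finset.mul_sum, ← Finset.sum_sub_distrib]
  exact Finset.sum_congr rfl fun j _ => by ring

/-- The type-II sum rule: the identity
`∑ (Q_j + d_j - L_j - e_j) = 8/3 ⬝ A_{33'} - 1/4 ⬝ A_{111'} - A_{221'}`,
and hence the sum vanishes when all three anomaly coefficients vanish. -/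
theorem typeII_sum_rule (Q u d L e : Fin 3 → ℚ) :
    (∑ j, (Q j + d j - L j - e j)) =
      8/3 * A331 Q u d - 1/4 * A111 Q u d L e - A221 Q L ∧
    (A111 Q u d L e = 0 → A221 Q L = 0 → A331 Q u d = 0 →
      (∑ j, (Q j + d j - L j - e j)) = 0) := by
  refine ⟨sum_typeII_eq_anomaly_combination Q u d L e, fun h111 h221 h331 => ?_⟩
  rw [sum_typeII_eq_anomaly_combination, h111, h221, h331]
  norm_num
end

section
/- Let $Q_j, u_j, L_j, e_j$ ($j=1,2,3$) and $H_1, H_2$ be rational numbers with $\mathcal{A}_{111'} = \mathcal{A}_{221'} = \mathcal{A}_{331'} = 0$. Define the type-II suppression exponents $n^{u}_i = Q_i + u_i + H_2$ and $n^{e}_i = L_i + e_i - H_1$ for $i=1,2,3$. Then $\sum_{i=1}^{3} n^{u}_i + \sum_{i=1}^{3} n^{e}_i = 3(H_2 - H_1)$; in particular this sum of exponents is an integer if and only if $3(H_2 - H_1)$ is an integer. -/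
/-!
The Higgs charges enter the six exponents only through `3 H₂ - 3 H₁`, and the remaining
sum `∑ (Qᵢ + uᵢ + Lᵢ + eᵢ)` is the linear combination `A₁₁₁'/4 + A₂₂₁' - 2/3 A₃₃₁'` of the
anomaly coefficients, so it vanishes when the anomalies cancel.
-/

lemma sum_add_add_const_add_sum_add_sub_const {ι R : Type*} [Fintype ι] [CommRing R]
    (Q u L e : ι → R) (c c' : R) :
    (∑ i, (Q i + u i + c)) + (∑ i, (L i + e i - c')) =
      ∑ i, (Q i + u i + L i + e i) + Fintype.card ι * (c - c') := by
  simp only [Finset.sum_add_distrib, Finset.sum_sub_distrib, Finset.sum_const,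
    Finset.card_univ, nsmul_eq_mul]
  ring

lemma sum_charges_eq_anomaly_combination (Q u d L e : Fin 3 → ℚ) :
    ∑ j, (Q j + u j + L j + e j) = A111 Q u d L e / 4 + A221 Q L - 2/3 * A331 Q u d := by
  simp only [A111, A221, A331, Fin.sum_univ_three]
  ring

/-- In a type-II model with vanishing anomalies, the sum of the up-type and
charged-lepton suppression exponents equals `3 (H₂ - H₁)`; in particular it is an
integer iff `3 (H₂ - H₁)` is. -/
theorem typeII_higgs_difference (Q u d L e : Fin 3 → ℚ) (H₁ H₂ : ℚ)
    (h111 : A111 Q u d L e = 0) (h221 : A221 Q L = 0) (h331 : A331 Q u d = 0) :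
    (∑ i, (Q i + u i + H₂)) + (∑ i, (L i + e i - H₁)) = 3 * (H₂ - H₁) ∧
    ((∃ n : ℤ, (∑ i, (Q i + u i + H₂)) + (∑ i, (L i + e i - H₁)) = n) ↔
      ∃ n : ℤ, 3 * (H₂ - H₁) = n) := by
  have hsum : (∑ i, (Q i + u i + H₂)) + (∑ i, (L i + e i - H₁)) = 3 * (H₂ - H₁) := by
    rw [sum_add_add_const_add_sum_add_sub_const, sum_charges_eq_anomaly_combination,
      h111, h221, h331]
    simp
  exact ⟨hsum, by rw [hsum]⟩
end

section
/- The rational charge assignment $Q = (\tfrac{8}{27}, -\tfrac{19}{27}, -\tfrac{73}{27})$, $u = (\tfrac{26}{27}, -\tfrac{28}{27}, -\tfrac{82}{27})$, $d = (\tfrac{34}{9}, \tfrac{25}{9}, \tfrac{25}{9})$, $L = (\tfrac{94}{27}, \tfrac{79}{27}, \tfrac{79}{27})$, $e = (\tfrac{43}{27}, -\tfrac{50}{27}, -\tfrac{77}{27})$, $\nu = (-\tfrac{3116597}{199755}, \tfrac{30795}{193}, -\tfrac{18344}{115})$, $H_1 = -\tfrac{79}{27}$, $H_2 = \tfrac{155}{27}$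 satisfies every equation of the anomaly-free 2HDM system (★). -/
/-- The anomaly-free 2HDM system (★): anomaly conditions, no kinetic mixing, and the
Froggatt-Nielsen phenomenological constraints. -/
def SystemStar (Q u d L e ν : Fin 3 → ℚ) (H₁ H₂ : ℚ) : Prop :=
  (∑ j, (Q j ^ 2 - 2 * u j ^ 2 + d j ^ 2 - L j ^ 2 + e j ^ 2)) = 0 ∧
  (∑ j, (Q j + 8 * u j + 2 * d j + 3 * L j + 6 * e j)) = 0 ∧
  (∑ j, (2 * Q j + u j + d j)) = 0 ∧
  (∑ j, (3 * Q j + L j)) = 0 ∧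
  (∑ j, (6 * Q j ^ 3 + 3 * u j ^ 3 + 3 * d j ^ 3 + 2 * L j ^ 3 + e j ^ 3 + ν j ^ 3)) = 0 ∧
  (∑ j, (2 * L j + e j + ν j)) = 0 ∧
  (∑ j, (2 * Q j - 4 * u j + 2 * d j - 2 * L j + 2 * e j)) = 0 ∧
  Q 2 + u 2 + H₂ = 0 ∧ Q 1 + u 1 + H₂ = 4 ∧ Q 0 + u 0 + H₂ = 7 ∧
  Q 2 + d 2 - H₁ = 3 ∧ Q 1 + d 1 - H₁ = 5 ∧ Q 0 + d 0 - H₁ = 7 ∧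
  L 2 + e 2 - H₁ = 3 ∧ L 1 + e 1 - H₁ = 4 ∧ L 0 + e 0 - H₁ = 8 ∧
  Q 0 - Q 1 = 1 ∧ Q 1 - Q 2 = 2 ∧
  L 1 - L 2 = 0 ∧ L 1 + H₁ = 0

/-- The explicit rational charge assignment of Table 1 satisfies every equation of the
anomaly-free 2HDM system (★). -/
theorem charges_satisfy_systemStar :
    SystemStar ![8/27, -19/27, -73/27] ![26/27, -28/27, -82/27]
      ![34/9, 25/9, 25/9] ![94/27, 79/27, 79/27] ![43/27, -50/27, -77/27]
      ![-3116597/199755, 30795/193, -18344/115] (-79/27) (155/27) := by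
  norm_num [SystemStar, Fin.sum_univ_three, Matrix.cons_val_two]
end

section
/- Rational numbers $Q_j, u_j, d_j, L_j, e_j, \nu_j$ ($j=1,2,3$), $H_1, H_2$ satisfy the anomaly-free 2HDM system (★) if and only if: $Q_1 = \tfrac{8}{27}$, $Q_2 = -\tfrac{19}{27}$, $Q_3 = -\tfrac{73}{27}$, $u_1 = \tfrac{26}{27}$, $u_2 = -\tfrac{28}{27}$, $u_3 = -\tfrac{82}{27}$, $d_1 = \tfrac{34}{9}$, $d_2 = \tfrac{25}{9}$, $d_3 = \tfrac{25}{9}$, $L_1 = \tfrac{94}{27}$, $L_2 = \tfrac{79}{27}$, $L_3 = \tfrac{79}{27}$, $e_1 = \tfrac{43}{27}$, $e_2 = -\tfrac{50}{27}$, $e_3 = -\tfrac{77}{27}$, $H_1 = -\tfrac{79}{27}$, $H_2 = \tfrac{155}{27}$, together with $\nu_1 + \nu_2 + \nu_3 = -\tfrac{140}{9}$ and $\nu_2^2\nu_3 + \tfrac{140}{9}\nu_2^2 + \nu_2\nu_3^2 + \tfrac{280}{9}\nu_2\nu_3 + \tfrac{19600}{81}\nu_2 + \tfrac{140}{9}\nu_3^2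 + \tfrac{19600}{81}\nu_3 + \tfrac{95036}{81} = 0$. -/
theorem sum_cubes_eq_of_add_add_eq_neg {R : Type*} [CommRing R] {x y z a : R}
    (h : x + y + z = -a) :
    x ^ 3 + y ^ 3 + z ^ 3 = -a ^ 3 - 3 * (a + y) * (a + z) * (y + z) := by
  obtain rfl : x = -a - y - z := by linear_combination h
  ring

namespace SystemStar

variable {Q u d L e ν : Fin 3 → ℚ} {H₁ H₂ s : ℚ}

theorem charges_affine (h : SystemStar Q u d L e ν H₁ H₂) (hs : ν 0 + ν 1 + ν 2 = s) :
    Q 0 = 4/3 + s/15 ∧ Q 1 = 1/3 + s/15 ∧ Q 2 = -5/3 + s/15 ∧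
    u 0 = 2 + s/15 ∧ u 1 = s/15 ∧ u 2 = -2 + s/15 ∧
    d 0 = 2/3 - s/5 ∧ d 1 = -1/3 - s/5 ∧ d 2 = -1/3 - s/5 ∧
    L 0 = -10 - 13 * s/15 ∧ L 1 = 5 + 2 * s/15 ∧ L 2 = 5 + 2 * s/15 ∧
    e 0 = 13 + 11 * s/15 ∧ e 1 = -6 - 4 * s/15 ∧ e 2 = -7 - 4 * s/15 ∧
    H₁ = -5 - 2 * s/15 ∧ H₂ = 11/3 - 2 * s/15 := by
  obtain ⟨-, h₁, h₂, h₃, -, h₄, h₅, p₁, p₂, p₃, p₄, p₅, p₆, p₇, p₈, p₉, p₁₀, p₁₁, p₁₂, p₁₃⟩ := h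
  simp only [Fin.sum_univ_three] at h₁ h₂ h₃ h₄ h₅
  refine ⟨?_, ?_, ?_, ?_, ?_, ?_, ?_, ?_, ?_, ?_, ?_, ?_, ?_, ?_, ?_, ?_, ?_⟩ <;> linarith

theorem sum_nu_eq (h : SystemStar Q u d L e ν H₁ H₂) : ν 0 + ν 1 + ν 2 = -140/9 := by
  obtain ⟨hQ₀, hQ₁, hQ₂, hu₀, hu₁, hu₂, hd₀, hd₁, hd₂, hL₀, hL₁, hL₂, he₀, he₁, he₂, -, -⟩ :=
    h.charges_affine rfl
  obtain ⟨hquad, -⟩ := h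
  simp only [Fin.sum_univ_three, hQ₀, hQ₁, hQ₂, hu₀, hu₁, hu₂, hd₀, hd₁, hd₂, hL₀, hL₁, hL₂,
    he₀, he₁, he₂] at hquad
  linear_combination hquad / 6

theorem charges_eq (h : SystemStar Q u d L e ν H₁ H₂) :
    Q 0 = 8/27 ∧ Q 1 = -19/27 ∧ Q 2 = -73/27 ∧
    u 0 = 26/27 ∧ u 1 = -28/27 ∧ u 2 = -82/27 ∧
    d 0 = 34/9 ∧ d 1 = 25/9 ∧ d 2 = 25/9 ∧
    L 0 = 94/27 ∧ L 1 = 79/27 ∧ L 2 = 79/27 ∧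
    e 0 = 43/27 ∧ e 1 = -50/27 ∧ e 2 = -77/27 ∧
    H₁ = -79/27 ∧ H₂ = 155/27 := by
  have := h.charges_affine h.sum_nu_eq
  norm_num at this ⊢
  exact this

theorem nu_cubic_eq_zero (h : SystemStar Q u d L e ν H₁ H₂) :
    ν 1 ^ 2 * ν 2 + 140/9 * ν 1 ^ 2 + ν 1 * ν 2 ^ 2 + 280/9 * ν 1 * ν 2
      + 19600/81 * ν 1 + 140/9 * ν 2 ^ 2 + 19600/81 * ν 2 + 95036/81 = 0 := by
  obtain ⟨hQ₀, hQ₁, hQ₂, hu₀, hu₁, hu₂, hd₀, hd₁, hd₂, hL₀, hL₁, hL₂, he₀, he₁, he₂, -, -⟩ :=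
    h.charges_eq
  have hν := sum_cubes_eq_of_add_add_eq_neg (h.sum_nu_eq.trans (neg_div _ _))
  obtain ⟨-, -, -, -, hcub, -⟩ := h
  simp only [Fin.sum_univ_three, hQ₀, hQ₁, hQ₂, hu₀, hu₁, hu₂, hd₀, hd₁, hd₂, hL₀, hL₁, hL₂,
    he₀, he₁, he₂] at hcub
  linear_combination hν / 3 - hcub / 3

end SystemStar

/-- The Gröbner basis of the system (★): the charges of the SM fields and the Higgs
fields are determined uniquely and the right-handed singlet charges satisfy a linear
and a cubic equation. -/
theorem systemStar_iff_groebner (Q u d L e ν : Fin 3 → ℚ) (H₁ H₂ : ℚ) :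
    SystemStar Q u d L e ν H₁ H₂ ↔
      (Q 0 = 8/27 ∧ Q 1 = -19/27 ∧ Q 2 = -73/27 ∧
       u 0 = 26/27 ∧ u 1 = -28/27 ∧ u 2 = -82/27 ∧
       d 0 = 34/9 ∧ d 1 = 25/9 ∧ d 2 = 25/9 ∧
       L 0 = 94/27 ∧ L 1 = 79/27 ∧ L 2 = 79/27 ∧
       e 0 = 43/27 ∧ e 1 = -50/27 ∧ e 2 = -77/27 ∧
       H₁ = -79/27 ∧ H₂ = 155/27 ∧
       ν 0 + ν 1 + ν 2 = -140/9 ∧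
       ν 1 ^ 2 * ν 2 + 140/9 * ν 1 ^ 2 + ν 1 * ν 2 ^ 2 + 280/9 * ν 1 * ν 2
         + 19600/81 * ν 1 + 140/9 * ν 2 ^ 2 + 19600/81 * ν 2 + 95036/81 = 0) := by
  refine ⟨fun h => ?_, ?_⟩
  · simpa only [and_assoc] using And.intro h.charges_eq ⟨h.sum_nu_eq, h.nu_cubic_eq_zero⟩
  rintro ⟨hQ₀, hQ₁, hQ₂, hu₀, hu₁, hu₂, hd₀, hd₁, hd₂, hL₀, hL₁, hL₂, he₀, he₁, he₂, hH₁, hH₂,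
    hs, hcubic⟩
  have hν := sum_cubes_eq_of_add_add_eq_neg (hs.trans (neg_div _ _))
  simp only [SystemStar, Fin.sum_univ_three, hQ₀, hQ₁, hQ₂, hu₀, hu₁, hu₂, hd₀, hd₁, hd₂, hL₀,
    hL₁, hL₂, he₀, he₁, he₂, hH₁, hH₂]
  exact ⟨by norm_num, by norm_num, by norm_num, by norm_num,
    by linear_combination hν - 3 * hcubic, by linear_combination hs, by norm_num, by norm_num⟩
end

section
/- For all rational numbers $Q_j, d_j, L_j, e_j, u_j$ ($j=1,2,3$) and $H_u, H_d$, defining the supersymmetric suppression exponents $n^{d}_i = Q_i + d_i + H_d$ and $n^{e}_i = L_i + e_i + H_d$, the identity $\sum_{i=1}^{3} n^{d}_i - \sum_{i=1}^{3} n^{e}_i = H_u + H_d - \big(\tfrac{1}{4}\mathcal{A}'_{111'} + \mathcal{A}'_{221'} - \tfrac{8}{3}\mathcal{A}'_{331'}\big)$ holds. -/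
/-- The supersymmetric `SU(3)_C`-`SU(3)_C`-`U(1)'` anomaly coefficient. -/
def A331' (Q u d : Fin 3 → ℚ) : ℚ :=
  1/2 * ∑ j, (2 * Q j + u j + d j)

/-- The supersymmetric `SU(2)_L`-`SU(2)_L`-`U(1)'` anomaly coefficient. -/
def A221' (Q L : Fin 3 → ℚ) (Hu Hd : ℚ) : ℚ :=
  1/2 * (Hu + Hd) + 1/2 * ∑ j, (3 * Q j + L j)

/-- The supersymmetric `U(1)_Y`-`U(1)_Y`-`U(1)'` anomaly coefficient. -/
def A111' (Q u d L e : Fin 3 → ℚ) (Hu Hd : ℚ) : ℚ :=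
  2 * (Hu + Hd) + 2/3 * ∑ j, (Q j + 8 * u j + 2 * d j + 3 * L j + 6 * e j)

/-- With the weights `1/4, 1, -8/3` the up-type charges `u_j` cancel. -/
theorem anomaly_combination_eq (Q u d L e : Fin 3 → ℚ) (Hu Hd : ℚ) :
    1/4 * A111' Q u d L e Hu Hd + A221' Q L Hu Hd - 8/3 * A331' Q u d =
      Hu + Hd - ∑ i, (Q i + d i) + ∑ i, (L i + e i) := by
  simp only [A111', A221', A331', Fin.sum_univ_three]
  ring

/-- The supersymmetric down/lepton sum rule: with suppression exponents
`n^d_i = Q_i + d_i + H_d` and `n^e_i = L_i + e_i + H_d`, one has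
`∑ n^d_i - ∑ n^e_i = H_u + H_d - (1/4 ⬝ A'_{111'} + A'_{221'} - 8/3 ⬝ A'_{331'})`. -/
theorem susy_down_lepton_sum_rule (Q u d L e : Fin 3 → ℚ) (Hu Hd : ℚ) :
    (∑ i, (Q i + d i + Hd)) - (∑ i, (L i + e i + Hd)) =
      Hu + Hd - (1/4 * A111' Q u d L e Hu Hd + A221' Q L Hu Hd
        - 8/3 * A331' Q u d) := by
  rw [anomaly_combination_eq]
  simp only [Finset.sum_add_distrib]
  ring
end

section
/- There do not exist rational numbers $Q_j, u_j, d_j, L_j, e_j$ ($j=1,2,3$) and $H_u, H_d$ such that the supersymmetric anomaly coefficients all vanish, $\mathcal{A}'_{111'} = \mathcal{A}'_{221'} = \mathcal{A}'_{331'} = 0$, and simultaneously the Froggatt-Nielsen suppression equations hold: $Q_1+u_1+H_u=7$, $Q_2+u_2+H_u=3$, $Q_3+u_3+H_u=0$, $Q_1+d_1+H_d=7$, $Q_2+d_2+H_d=5$, $Q_3+d_3+H_d=2$, $L_1+e_1+H_d=8$, $L_2+e_2+H_d=4$, $L_3+e_3+H_d=3$. (I.e., the Froggatt-Nielsen mechanism,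 vanishing anomalies, and supersymmetry cannot be combined.) -/
/-!
Let `n_U`, `n_D`, `n_L` be the exponents of `ε` in `det Y^U`, `det Y^D`, `det Y^L`. Identically in
the charges, `A'₁₁₁ + 4 A'₂₂₁ - 8 A'₃₃₁ = 4/3 (n_U - 2 n_D + 3 n_L)`, so vanishing anomalies force
`n_U - 2 n_D + 3 n_L = 0`, whereas the imposed textures give `10 - 2 * 14 + 3 * 15 = 27`.
-/

/-- The exponent of `ε` in `det Y` for a Froggatt-Nielsen Yukawa matrix
`Y i j ~ ε ^ (a i + b j + h)`. -/
def detExponent (a b : Fin 3 → ℚ) (h : ℚ) : ℚ :=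
  ∑ j, (a j + b j + h)

theorem A111'_add_four_mul_A221'_sub_eight_mul_A331' (Q u d L e : Fin 3 → ℚ) (Hu Hd : ℚ) :
    A111' Q u d L e Hu Hd + 4 * A221' Q L Hu Hd - 8 * A331' Q u d =
      4 / 3 * (detExponent Q u Hu - 2 * detExponent Q d Hd + 3 * detExponent L e Hd) := by
  simp only [A111', A221', A331', detExponent, Fin.sum_univ_three]
  ring

theorem detExponent_sub_two_mul_add_three_mul_eq_zero {Q u d L e : Fin 3 → ℚ} {Hu Hd : ℚ}
    (h111 : A111' Q u d L e Hu Hd = 0) (h221 : A221' Q L Hu Hd = 0) (h331 : A331' Q u d = 0) :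
    detExponent Q u Hu - 2 * detExponent Q d Hd + 3 * detExponent L e Hd = 0 := by
  have h := A111'_add_four_mul_A221'_sub_eight_mul_A331' Q u d L e Hu Hd
  rw [h111, h221, h331] at h
  linarith

/-- The Froggatt-Nielsen mechanism, vanishing anomalies and supersymmetry cannot be
combined: there is no rational charge assignment with all supersymmetric anomaly
coefficients vanishing and satisfying the imposed suppression equations. -/
theorem susy_anomaly_free_FN_impossible :
    ¬ ∃ (Q u d L e : Fin 3 → ℚ) (Hu Hd : ℚ),
      A111' Q u d L e Hu Hd = 0 ∧ A221' Q L Hu Hd = 0 ∧ A331' Q u d = 0 ∧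
      Q 0 + u 0 + Hu = 7 ∧ Q 1 + u 1 + Hu = 3 ∧ Q 2 + u 2 + Hu = 0 ∧
      Q 0 + d 0 + Hd = 7 ∧ Q 1 + d 1 + Hd = 5 ∧ Q 2 + d 2 + Hd = 2 ∧
      L 0 + e 0 + Hd = 8 ∧ L 1 + e 1 + Hd = 4 ∧ L 2 + e 2 + Hd = 3 := by
  rintro ⟨Q, u, d, L, e, Hu, Hd, h111, h221, h331, hU₀, hU₁, hU₂, hD₀, hD₁, hD₂, hL₀, hL₁, hL₂⟩
  have h := detExponent_sub_two_mul_add_three_mul_eq_zero h111 h221 h331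
  simp only [detExponent, Fin.sum_univ_three, hU₀, hU₁, hU₂, hD₀, hD₁, hD₂, hL₀, hL₁, hL₂] at h
  norm_num at h
end
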